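/- Let G be the rewrite game over {a,b} with rules a^{k_1} → ε, ..., a^{k_n} → ε, b^{ℓ_1} → ε, ..., b^{ℓ_m} → ε, where all k_r > 1 and all ℓ_s > 1. Then the set of P-positions of G is not a regular language. -/
import Mathlib

inductive AB | a | b
deriving DecidableEq

/-- One move of the taking-and-merging game whose rules are `a^k → ε` for `k ∈ K`
and `b^ℓ → ε` for `ℓ ∈ L`. -/
def Step (K L : Finset ℕ) (w w' : List AB) : Prop :=
  ∃ x y : List AB, w' = x ++ y ∧
    ((∃ k ∈ K, w = x ++ List.replicate k AB.a ++ y) ∨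
     (∃ l ∈ L, w = x ++ List.replicate l AB.b ++ y))

/-- A language over `{a,b}` is regular if it is accepted by a DFA with finitely
many states. -/
def Regular (Lang : Set (List AB)) : Prop :=
  ∃ (σ : Type) (_ : Fintype σ) (M : DFA AB σ), M.accepts = Lang

namespace Stmt5Aux
open List

/-- run bound: every infix run of `c` has length ≤ n -/
def Rb (c : AB) (n : ℕ) (w : List AB) : Prop :=
  ∀ m, replicate m c <:+: w → m ≤ n

theorem take_eq_of_prefix {α} {p w : List α} (h : p <+: w) {n : ℕ} (hn : n ≤ p.length) :
    p.take n = w.take n := by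
  obtain ⟨t, rfl⟩ := h
  rw [List.take_append, Nat.sub_eq_zero_of_le hn, List.take_zero,
    List.append_nil]

theorem infix_append_cases {α} {s u v : List α} (h : s <:+: u ++ v) :
    s <:+: u ∨ s <:+: v ∨ ∃ s₁ s₂, s = s₁ ++ s₂ ∧ s₁ <:+ u ∧ s₂ <+: v := by
  obtain ⟨x, y, hxy⟩ := h
  rcases le_or_gt (x.length + s.length) u.length with h1 | h1
  · left
    have hp : x ++ s <+: u := by
      refine List.prefix_of_prefix_length_le ⟨y, by simpa [List.append_assoc] using hxy⟩
        ⟨v, rfl⟩ ?_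
      simpa using h1
    obtain ⟨t, ht⟩ := hp
    exact ⟨x, t, by simp [← ht]⟩
  rcases le_or_gt u.length x.length with h2 | h2
  · right; left
    have hp : u <+: x := by
      refine List.prefix_of_prefix_length_le ⟨v, rfl⟩
        ⟨s ++ y, by simpa [List.append_assoc] using hxy⟩ h2
    obtain ⟨t, ht⟩ := hp
    subst ht
    refine ⟨t, y, ?_⟩
    have := hxy
    rw [List.append_assoc, List.append_assoc] at this
    have := (List.append_cancel_left this)
    simpa [List.append_assoc] using this
  · right; right
    set t := u.length - x.length with hts
    have hu : u = x ++ s.take t := by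
      have hxs : x ++ s <+: u ++ v := ⟨y, by simpa [List.append_assoc] using hxy⟩
      have h3 : u.length ≤ (x ++ s).length := by simp; omega
      have heq : (x ++ s).take u.length = (u ++ v).take u.length :=
        take_eq_of_prefix hxs h3
      rw [List.take_left] at heq
      rw [List.take_append] at heq
      rw [List.take_of_length_le (le_of_lt h2)] at heq
      rw [← heq]
    refine ⟨s.take t, s.drop t, (List.take_append_drop t s).symm, ⟨x, hu.symm⟩, ?_⟩
    refine ⟨y, ?_⟩
    have h4 : x ++ (s.take t ++ v) = x ++ (s.take t ++ (s.drop t ++ y)) := by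
      rw [← List.append_assoc, ← hu, ← hxy]
      simp only [List.append_assoc]
      rw [← List.append_assoc (s.take t), List.take_append_drop]
    exact (List.append_cancel_left (List.append_cancel_left h4)).symm

theorem suffix_append_cases {α} {s u v : List α} (h : s <:+ u ++ v) :
    s <:+ v ∨ ∃ s₁, s = s₁ ++ v ∧ s₁ <:+ u := by
  rcases le_or_gt s.length v.length with h1 | h1
  · left
    exact List.suffix_of_suffix_length_le h (List.suffix_append u v) h1
  · right
    have hv : v <:+ s := List.suffix_of_suffix_length_le (List.suffix_append u v) h (le_of_lt h1)
    obtain ⟨s₁, rfl⟩ := hv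
    obtain ⟨x, hx⟩ := h
    refine ⟨s₁, rfl, x, ?_⟩
    rw [← List.append_assoc] at hx
    exact List.append_cancel_right hx

theorem prefix_append_cases {α} {s u v : List α} (h : s <+: u ++ v) :
    s <+: u ∨ ∃ s₂, s = u ++ s₂ ∧ s₂ <+: v := by
  rcases le_or_gt s.length u.length with h1 | h1
  · left
    exact List.prefix_of_prefix_length_le h (u.prefix_append v) h1
  · right
    have hu : u <+: s := List.prefix_of_prefix_length_le (u.prefix_append v) h (le_of_lt h1)
    obtain ⟨s₂, rfl⟩ := hu
    obtain ⟨x, hx⟩ := h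
    refine ⟨s₂, rfl, x, ?_⟩
    rw [List.append_assoc] at hx
    exact List.append_cancel_left hx

theorem rep_split {c : AB} {m : ℕ} {s₁ s₂ : List AB} (h : replicate m c = s₁ ++ s₂) :
    s₁ = replicate s₁.length c ∧ s₂ = replicate s₂.length c ∧ s₁.length + s₂.length = m := by
  have h1 : s₁ <+ replicate m c := h ▸ (s₁.prefix_append s₂).sublist
  have h2 : s₂ <+ replicate m c := h ▸ (List.suffix_append s₁ s₂).sublist
  obtain ⟨n₁, _, e₁⟩ := List.sublist_replicate_iff.mp h1
  obtain ⟨n₂, _, e₂⟩ := List.sublist_replicate_iff.mp h2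
  have hl : s₁.length + s₂.length = m := by
    have := congrArg List.length h
    simpa using this.symm
  constructor
  · rw [e₁]; simp
  constructor
  · rw [e₂]; simp
  · exact hl

theorem rb_mono {c n n' w} (h : Rb c n w) (hle : n ≤ n') : Rb c n' w :=
  fun m hm => le_trans (h m hm) hle

theorem rb_rep {c c' : AB} {m : ℕ} : Rb c m (replicate m c') := by
  intro n h
  simpa using h.sublist.length_le

theorem rb_rep_ne {c c' : AB} (h : c ≠ c') {m : ℕ} : Rb c 0 (replicate m c') := by
  intro n hn
  by_contra hc
  have h1 : c ∈ replicate n c := List.mem_replicate.mpr ⟨by omega, rfl⟩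
  have := hn.sublist.subset h1
  exact h (List.eq_of_mem_replicate this)

theorem rb_nil {c : AB} : Rb c 0 ([] : List AB) := by
  intro n hn
  have := hn.sublist.length_le
  simpa using this

theorem suffix_run_zero {c : AB} {w : List AB} (h : w.getLast? ≠ some c) :
    ∀ m, replicate m c <:+ w → m = 0 := by
  intro m hm
  by_contra hc
  obtain ⟨t, ht⟩ := hm
  apply h
  rw [← ht, List.getLast?_append]
  have : (replicate m c).getLast? = some c := by
    obtain ⟨m', rfl⟩ := Nat.exists_eq_succ_of_ne_zero hc
    rw [List.replicate_succ', List.getLast?_concat]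
  rw [this]
  rfl

theorem prefix_run_zero {c : AB} {w : List AB} (h : w.head? ≠ some c) :
    ∀ m, replicate m c <+: w → m = 0 := by
  intro m hm
  by_contra hc
  obtain ⟨t, ht⟩ := hm
  apply h
  obtain ⟨m', rfl⟩ := Nat.exists_eq_succ_of_ne_zero hc
  rw [← ht, List.replicate_succ]
  rfl

theorem rb_append {c : AB} {n nu nv : ℕ} {u v : List AB}
    (hu : Rb c nu u) (hv : Rb c nv v) (h1 : nu ≤ n) (h2 : nv ≤ n)
    (hs : ∀ m₁ m₂, replicate m₁ c <:+ u → replicate m₂ c <+: v → m₁ + m₂ ≤ n) :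
    Rb c n (u ++ v) := by
  intro m hm
  rcases infix_append_cases hm with h | h | ⟨s₁, s₂, he, hsu, hsv⟩
  · exact le_trans (hu m h) h1
  · exact le_trans (hv m h) h2
  · obtain ⟨e₁, e₂, hl⟩ := rep_split he
    rw [e₁] at hsu
    rw [e₂] at hsv
    have := hs _ _ hsu hsv
    omega

theorem suffix_run_append_rep {c : AB} {p q : ℕ} {u : List AB}
    (hu : ∀ m, replicate m c <:+ u → m ≤ p) :
    ∀ m, replicate m c <:+ u ++ replicate q c → m ≤ p + q := by
  intro m hm
  rcases suffix_append_cases hm with h | ⟨s₁, he, hsu⟩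
  · have := h.sublist.length_le
    simp at this
    omega
  · have hlen : s₁.length = m - q ∧ q ≤ m := by
      have := congrArg List.length he
      simp at this
      omega
    have : s₁ = replicate s₁.length c := by
      have h1 : s₁ <+ replicate m c := he ▸ (s₁.prefix_append _).sublist
      obtain ⟨n₁, _, e₁⟩ := List.sublist_replicate_iff.mp h1
      rw [e₁]; simp
    rw [this] at hsu
    have := hu _ hsu
    omega

theorem trailing_run (c : AB) (z : List AB) :
    ∃ z₁ p, z = z₁ ++ replicate p c ∧ z₁.getLast? ≠ some c := by
  induction z using List.reverseRecOn with
  | nil => exact ⟨[], 0, by simp, by simp⟩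
  | append_singleton t d ih =>
    by_cases hd : d = c
    · obtain ⟨z₁, p, hz, hl⟩ := ih
      refine ⟨z₁, p + 1, ?_, hl⟩
      rw [hz, List.replicate_succ', hd, List.append_assoc]
    · exact ⟨t ++ [d], 0, by simp, by
        rw [List.getLast?_concat]
        simpa using hd⟩

theorem leading_run (c : AB) (z : List AB) :
    ∃ z₁ q, z = replicate q c ++ z₁ ∧ z₁.head? ≠ some c := by
  induction z with
  | nil => exact ⟨[], 0, by simp, by simp⟩
  | cons d t ih =>
    by_cases hd : d = c
    · obtain ⟨z₁, q, hz, hl⟩ := ih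
      refine ⟨z₁, q + 1, ?_, hl⟩
      rw [hz, List.replicate_succ, hd]
      rfl
    · exact ⟨d :: t, 0, by simp, by simpa using hd⟩

/-- Any occurrence of `c^n` extends to a maximal run occurrence, and removing the
`c^n` gives the same result as removing `n` letters from the maximal run. -/
theorem occ_maximalize {c : AB} {n : ℕ} {w x y : List AB}
    (h : w = x ++ replicate n c ++ y) :
    ∃ x₁ m y₁, w = x₁ ++ replicate m c ++ y₁ ∧ n ≤ m ∧
      x₁.getLast? ≠ some c ∧ y₁.head? ≠ some c ∧
      x ++ y = x₁ ++ replicate (m - n) c ++ y₁ := by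
  obtain ⟨x₁, p, hx, hxl⟩ := trailing_run c x
  obtain ⟨y₁, q, hy, hyl⟩ := leading_run c y
  refine ⟨x₁, p + n + q, y₁, ?_, by omega, hxl, hyl, ?_⟩
  · rw [h, hx, hy]
    simp only [List.append_assoc, List.replicate_add]
  · rw [hx, hy]
    have : p + n + q - n = p + q := by omega
    rw [this]
    simp only [List.append_assoc, List.replicate_add]

/-- unique maximal-run occurrence matching -/
theorem occ_match {c : AB} {m m' : ℕ} {u v x y : List AB}
    (h : u ++ replicate m c ++ v = x ++ replicate m' c ++ y)
    (hu : u.getLast? ≠ some c) (hv : v.head? ≠ some c)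
    (hx : x.getLast? ≠ some c) (hy : y.head? ≠ some c) :
    (u = x ∧ m = m' ∧ v = y) ∨ replicate m' c <:+: u ∨ replicate m' c <:+: v := by
  have h' : u ++ (replicate m c ++ v) = x ++ (replicate m' c ++ y) := by
    simpa [List.append_assoc] using h
  rcases lt_trichotomy x.length u.length with hlen | hlen | hlen
  · right; left
    have hpx : x <+: u :=
      List.prefix_of_prefix_length_le ⟨replicate m' c ++ y, h'.symm⟩
        ⟨replicate m c ++ v, rfl⟩ (le_of_lt hlen)
    obtain ⟨r, hr⟩ := hpx
    have hr0 : r.length ≠ 0 := by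
      have := congrArg List.length hr
      simp at this
      omega
    have hc : r ++ (replicate m c ++ v) = replicate m' c ++ y := by
      apply List.append_cancel_left (as := x)
      rw [← List.append_assoc, hr]
      exact h'
    rcases le_or_gt m' r.length with h1 | h1
    · have hp2 : replicate m' c <+: r :=
        List.prefix_of_prefix_length_le ⟨y, by rw [← hc]⟩
          ⟨replicate m c ++ v, rfl⟩ (by simpa using h1)
      obtain ⟨t, ht⟩ := hp2
      refine ⟨x, t, ?_⟩
      rw [List.append_assoc, ht]
      exact hr
    · exfalso
      have hrp : r <+: replicate m' c :=
        List.prefix_of_prefix_length_le ⟨replicate m c ++ v, hc⟩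
          ⟨y, rfl⟩ (by simpa using le_of_lt h1)
      obtain ⟨n₁, _, e₁⟩ := List.sublist_replicate_iff.mp hrp.sublist
      have hre : r = replicate r.length c := by rw [e₁]; simp
      apply hu
      rw [← hr, List.getLast?_append, hre]
      obtain ⟨m'', hm''⟩ := Nat.exists_eq_succ_of_ne_zero hr0
      rw [hm'', List.replicate_succ', List.getLast?_concat]
      rfl
  · left
    obtain ⟨hux, hrest⟩ := List.append_inj h' hlen.symm
    subst hux
    rcases lt_trichotomy m m' with h1 | h1 | h1
    · exfalso
      have h2 : replicate m c ++ v = replicate m c ++ (replicate (m' - m) c ++ y) := by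
        rw [hrest, ← List.append_assoc, ← List.replicate_add]
        have : m + (m' - m) = m' := by omega
        rw [this]
      have hv' := List.append_cancel_left h2
      apply hv
      rw [hv']
      obtain ⟨d, hd⟩ := Nat.exists_eq_succ_of_ne_zero (show m' - m ≠ 0 by omega)
      rw [hd, List.replicate_succ]
      rfl
    · subst h1
      exact ⟨rfl, rfl, List.append_cancel_left hrest⟩
    · exfalso
      have h2 : replicate m' c ++ y = replicate m' c ++ (replicate (m - m') c ++ v) := by
        rw [← hrest, ← List.append_assoc, ← List.replicate_add]
        have : m' + (m - m') = m := by omega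
        rw [this]
      have hy' := List.append_cancel_left h2
      apply hy
      rw [hy']
      obtain ⟨d, hd⟩ := Nat.exists_eq_succ_of_ne_zero (show m - m' ≠ 0 by omega)
      rw [hd, List.replicate_succ]
      rfl
  · right; right
    have hpx : u <+: x :=
      List.prefix_of_prefix_length_le ⟨replicate m c ++ v, rfl⟩
        ⟨replicate m' c ++ y, h'.symm⟩ (le_of_lt hlen)
    obtain ⟨r, hr⟩ := hpx
    have hr0 : r.length ≠ 0 := by
      have := congrArg List.length hr
      simp at this
      omega
    have hc : replicate m c ++ v = r ++ (replicate m' c ++ y) := by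
      apply List.append_cancel_left (as := u)
      conv_rhs => rw [← List.append_assoc, hr]
      exact h'
    rcases le_or_gt r.length m with h1 | h1
    · exfalso
      have hrp : r <+: replicate m c :=
        List.prefix_of_prefix_length_le ⟨replicate m' c ++ y, hc.symm⟩
          ⟨v, rfl⟩ (by simpa using h1)
      obtain ⟨n₁, _, e₁⟩ := List.sublist_replicate_iff.mp hrp.sublist
      have hre : r = replicate r.length c := by rw [e₁]; simp
      apply hx
      rw [← hr, List.getLast?_append, hre]
      obtain ⟨m'', hm''⟩ := Nat.exists_eq_succ_of_ne_zero hr0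
      rw [hm'', List.replicate_succ', List.getLast?_concat]
      rfl
    · have hrp : replicate m c <+: r :=
        List.prefix_of_prefix_length_le ⟨v, hc⟩
          ⟨replicate m' c ++ y, rfl⟩ (by simpa using le_of_lt h1)
      obtain ⟨r', hr'⟩ := hrp
      have h5 : replicate m c ++ v = replicate m c ++ (r' ++ (replicate m' c ++ y)) := by
        rw [hc, ← hr']
        simp [List.append_assoc]
      have hv2 := List.append_cancel_left h5
      exact ⟨r', y, by rw [hv2]; simp [List.append_assoc]⟩

theorem head?_replicate {c : AB} {n : ℕ} (h : 1 ≤ n) : (replicate n c).head? = some c := by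
  obtain ⟨n', rfl⟩ := Nat.exists_eq_succ_of_ne_zero (by omega : n ≠ 0)
  rw [List.replicate_succ]
  rfl

theorem getLast?_replicate {c : AB} {n : ℕ} (h : 1 ≤ n) : (replicate n c).getLast? = some c := by
  obtain ⟨n', rfl⟩ := Nat.exists_eq_succ_of_ne_zero (by omega : n ≠ 0)
  rw [List.replicate_succ', List.getLast?_concat]

theorem head?_append_left {u v : List AB} {d : AB} (h : u.head? = some d) :
    (u ++ v).head? = some d := by
  cases u with
  | nil => simp at h
  | cons e t => simpa using h

theorem getLast?_append_right {u v : List AB} {d : AB} (h : v.getLast? = some d) :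
    (u ++ v).getLast? = some d := by
  rw [List.getLast?_append, h]
  rfl

theorem rb_len {c : AB} {w : List AB} : Rb c w.length w := by
  intro m h
  simpa using h.sublist.length_le

theorem rb_single_ne {c d : AB} (h : c ≠ d) : Rb c 0 [d] := by
  have := rb_rep_ne (c := c) (c' := d) h (m := 1)
  simpa using this

/-! the words -/

def Bw (lam : ℕ) : ℕ → List AB
  | 0 => []
  | i+1 => Bw lam i ++ (replicate lam AB.b ++ [AB.a])

def Sw (kap : ℕ) : ℕ → List AB
  | 0 => []
  | j+1 => AB.b :: (replicate kap AB.a ++ Sw kap j)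

theorem lastB (lam i : ℕ) : (Bw lam i).getLast? ≠ some AB.b := by
  cases i with
  | zero => simp [Bw]
  | succ i =>
    show (Bw lam i ++ (replicate lam AB.b ++ [AB.a])).getLast? ≠ some AB.b
    rw [← List.append_assoc, List.getLast?_concat]
    simp

theorem headB {lam : ℕ} (hl : 1 ≤ lam) (i : ℕ) : (Bw lam i).head? ≠ some AB.a := by
  induction i with
  | zero => simp [Bw]
  | succ i ih =>
    show (Bw lam i ++ (replicate lam AB.b ++ [AB.a])).head? ≠ some AB.a
    cases hB : (Bw lam i).head? with
    | none =>
      have : Bw lam i = [] := by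
        cases h : Bw lam i with
        | nil => rfl
        | cons e t => rw [h] at hB; simp at hB
      rw [this, List.nil_append,
        head?_append_left (head?_replicate (c := AB.b) hl)]
      simp
    | some d =>
      rw [head?_append_left hB]
      rw [hB] at ih
      exact ih

theorem headS (kap j : ℕ) : (Sw kap j).head? ≠ some AB.a := by
  cases j with
  | zero => simp [Sw]
  | succ j => simp [Sw]

theorem lastS {kap : ℕ} (hk : 1 ≤ kap) (j : ℕ) : (Sw kap j).getLast? ≠ some AB.b := by
  induction j with
  | zero => simp [Sw]
  | succ j ih =>
    show ([AB.b] ++ (replicate kap AB.a ++ Sw kap j)).getLast? ≠ some AB.b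
    rw [List.getLast?_append, List.getLast?_append]
    cases hS : (Sw kap j).getLast? with
    | none =>
      rw [getLast?_replicate hk]
      simp
    | some d =>
      rw [hS] at ih
      have : d = AB.a := by cases d; rfl; exact absurd rfl ih
      rw [this, getLast?_replicate hk]
      simp

theorem headU {kap : ℕ} (hk : 1 ≤ kap) (j : ℕ) :
    (replicate kap AB.a ++ Sw kap j).head? = some AB.a :=
  head?_append_left (head?_replicate hk)

theorem lastBβ {lam : ℕ} (hl : 1 ≤ lam) (i : ℕ) :
    (Bw lam i ++ replicate lam AB.b).getLast? = some AB.b :=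
  getLast?_append_right (getLast?_replicate hl)

/-! run bounds -/

theorem rbB_a {lam : ℕ} (hl : 1 ≤ lam) : ∀ i, Rb AB.a 1 (Bw lam i) := by
  intro i
  induction i with
  | zero => exact rb_mono rb_nil (by omega)
  | succ i ih =>
    show Rb AB.a 1 (Bw lam i ++ (replicate lam AB.b ++ [AB.a]))
    refine rb_append ih ?_ le_rfl le_rfl ?_
    · refine rb_append (rb_rep_ne (by simp)) (by simpa using rb_len (c := AB.a) (w := [AB.a]))
        (by omega) le_rfl ?_
      intro m₁ m₂ h1 h2
      have h1' : m₁ = 0 := suffix_run_zero (by rw [getLast?_replicate hl]; simp) m₁ h1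
      have h2' : m₂ ≤ 1 := by simpa using h2.sublist.length_le
      omega
    · intro m₁ m₂ h1 h2
      have h1' : m₁ ≤ 1 := ih m₁ h1.isInfix
      have h2' : m₂ = 0 := prefix_run_zero
        (by rw [head?_append_left (head?_replicate (c := AB.b) hl)]; simp) m₂ h2
      omega

theorem rbB_b {lam : ℕ} (hl : 1 ≤ lam) : ∀ i, Rb AB.b lam (Bw lam i) := by
  intro i
  induction i with
  | zero => exact rb_mono rb_nil (by omega)
  | succ i ih =>
    show Rb AB.b lam (Bw lam i ++ (replicate lam AB.b ++ [AB.a]))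
    have hv : Rb AB.b lam (replicate lam AB.b ++ [AB.a]) := by
      refine rb_append (by simpa using rb_len (c := AB.b) (w := replicate lam AB.b))
        (rb_single_ne (by simp)) le_rfl (by omega) ?_
      intro m₁ m₂ h1 h2
      have h1' : m₁ ≤ lam := by simpa using h1.sublist.length_le
      have h2' : m₂ = 0 := prefix_run_zero (by simp) m₂ h2
      omega
    refine rb_append ih hv le_rfl le_rfl ?_
    intro m₁ m₂ h1 h2
    have h1' : m₁ = 0 := suffix_run_zero (lastB lam i) m₁ h1
    have h2' : m₂ ≤ lam := hv m₂ h2.isInfix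
    omega

theorem rbU_a_of {kap : ℕ} {j : ℕ} (h : Rb AB.a kap (Sw kap j)) :
    Rb AB.a kap (replicate kap AB.a ++ Sw kap j) := by
  refine rb_append (by simpa using rb_len (c := AB.a) (w := replicate kap AB.a)) h
    le_rfl le_rfl ?_
  intro m₁ m₂ h1 h2
  have h1' : m₁ ≤ kap := by simpa using h1.sublist.length_le
  have h2' : m₂ = 0 := prefix_run_zero (headS kap j) m₂ h2
  omega

theorem rbS_a {kap : ℕ} : ∀ j, Rb AB.a kap (Sw kap j) := by
  intro j
  induction j with
  | zero => exact rb_mono rb_nil (by omega)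
  | succ j ih =>
    show Rb AB.a kap ([AB.b] ++ (replicate kap AB.a ++ Sw kap j))
    refine rb_append (rb_single_ne (by simp)) (rbU_a_of ih) (by omega) le_rfl ?_
    intro m₁ m₂ h1 h2
    have h1' : m₁ = 0 := suffix_run_zero (by simp) m₁ h1
    have h2' : m₂ ≤ kap := (rbU_a_of ih) m₂ h2.isInfix
    omega

theorem rbU_b_of {kap : ℕ} (hk : 1 ≤ kap) {j : ℕ} (h : Rb AB.b 1 (Sw kap j)) :
    Rb AB.b 1 (replicate kap AB.a ++ Sw kap j) := by
  refine rb_append (rb_rep_ne (by simp)) h (by omega) le_rfl ?_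
  intro m₁ m₂ h1 h2
  have h1' : m₁ = 0 := suffix_run_zero (by rw [getLast?_replicate hk]; simp) m₁ h1
  have h2' : m₂ ≤ 1 := h m₂ h2.isInfix
  omega

theorem rbS_b {kap : ℕ} (hk : 1 ≤ kap) : ∀ j, Rb AB.b 1 (Sw kap j) := by
  intro j
  induction j with
  | zero => exact rb_mono rb_nil (by omega)
  | succ j ih =>
    show Rb AB.b 1 ([AB.b] ++ (replicate kap AB.a ++ Sw kap j))
    refine rb_append (by simpa using rb_len (c := AB.b) (w := [AB.b])) (rbU_b_of hk ih)
      le_rfl le_rfl ?_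
    intro m₁ m₂ h1 h2
    have h1' : m₁ ≤ 1 := by simpa using h1.sublist.length_le
    have h2' : m₂ = 0 := prefix_run_zero (by rw [headU hk]; simp) m₂ h2
    omega

theorem rbBβ_a {lam : ℕ} (hl : 1 ≤ lam) (i : ℕ) :
    Rb AB.a 1 (Bw lam i ++ replicate lam AB.b) := by
  refine rb_append (rbB_a hl i) (rb_rep_ne (by simp)) le_rfl (by omega) ?_
  intro m₁ m₂ h1 h2
  have h1' : m₁ ≤ 1 := (rbB_a hl i) m₁ h1.isInfix
  have h2' : m₂ = 0 := prefix_run_zero (by rw [head?_replicate hl]; simp) m₂ h2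
  omega

theorem rbBβ_b {lam : ℕ} (hl : 1 ≤ lam) (i : ℕ) :
    Rb AB.b lam (Bw lam i ++ replicate lam AB.b) := by
  refine rb_append (rbB_b hl i) (by simpa using rb_len (c := AB.b) (w := replicate lam AB.b))
    le_rfl le_rfl ?_
  intro m₁ m₂ h1 h2
  have h1' : m₁ = 0 := suffix_run_zero (lastB lam i) m₁ h1
  have h2' : m₂ ≤ lam := by simpa using h2.sublist.length_le
  omega

theorem sbBβ_b {lam : ℕ} (i : ℕ) :
    ∀ m, replicate m AB.b <:+ (Bw lam i ++ replicate lam AB.b) → m ≤ lam := by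
  intro m hm
  have := suffix_run_append_rep (c := AB.b) (p := 0) (q := lam) (u := Bw lam i)
    (fun m h => le_of_eq (suffix_run_zero (lastB lam i) m h)) m hm
  omega

theorem rbW_a {kap lam : ℕ} (hk : 1 ≤ kap) (hl : 1 ≤ lam) (i j : ℕ) :
    Rb AB.a kap (Bw lam i ++ (replicate (lam+1) AB.b ++ (replicate kap AB.a ++ Sw kap j))) := by
  have hv : Rb AB.a kap (replicate (lam+1) AB.b ++ (replicate kap AB.a ++ Sw kap j)) := by
    refine rb_append (rb_rep_ne (by simp)) (rbU_a_of (rbS_a j)) (by omega) le_rfl ?_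
    intro m₁ m₂ h1 h2
    have h1' : m₁ = 0 := suffix_run_zero (by rw [getLast?_replicate (by omega : 1 ≤ lam+1)]; simp) m₁ h1
    have h2' : m₂ ≤ kap := (rbU_a_of (rbS_a j)) m₂ h2.isInfix
    omega
  refine rb_append (rb_mono (rbB_a hl i) hk) hv le_rfl le_rfl ?_
  intro m₁ m₂ h1 h2
  have h1' : m₁ ≤ 1 := (rbB_a hl i) m₁ h1.isInfix
  have h2' : m₂ = 0 := prefix_run_zero
    (by rw [head?_append_left (head?_replicate (c := AB.b) (by omega : 1 ≤ lam+1))]; simp) m₂ h2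
  omega

theorem rbV_b {kap lam : ℕ} (hk : 1 ≤ kap) (hl : 1 ≤ lam) (i j : ℕ) :
    Rb AB.b lam ((Bw lam i ++ replicate lam AB.b) ++ (replicate (kap+1) AB.a ++ Sw kap j)) := by
  have hv : Rb AB.b lam (replicate (kap+1) AB.a ++ Sw kap j) := by
    refine rb_append (rb_rep_ne (by simp)) (rbS_b hk j) (by omega) hl ?_
    intro m₁ m₂ h1 h2
    have h1' : m₁ = 0 := suffix_run_zero (by rw [getLast?_replicate (by omega : 1 ≤ kap+1)]; simp) m₁ h1
    have h2' : m₂ ≤ 1 := (rbS_b hk j) m₂ h2.isInfix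
    omega
  refine rb_append (rbBβ_b hl i) hv le_rfl le_rfl ?_
  intro m₁ m₂ h1 h2
  have h1' : m₁ ≤ lam := sbBβ_b i m₁ h1
  have h2' : m₂ = 0 := prefix_run_zero
    (by rw [head?_append_left (head?_replicate (c := AB.a) (by omega : 1 ≤ kap+1))]; simp) m₂ h2
  omega

section Game

variable {K L : Finset ℕ} {kap lam : ℕ}

theorem noMoveW0 (hk : 1 ≤ kap) (hl : 1 ≤ lam)
    (hkmin : ∀ k' ∈ K, kap + 1 ≤ k') (hlmin : ∀ l' ∈ L, lam + 1 ≤ l')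
    (i : ℕ) (w' : List AB) :
    ¬ Step K L (Bw lam i ++ replicate lam AB.b) w' := by
  rintro ⟨x, y, hw', (⟨k', hk', heq⟩ | ⟨l', hl', heq⟩)⟩
  · have h1 : k' ≤ 1 := rbBβ_a hl i k' ⟨x, y, heq.symm⟩
    have := hkmin k' hk'
    omega
  · have h1 : l' ≤ lam := rbBβ_b hl i l' ⟨x, y, heq.symm⟩
    have := hlmin l' hl'
    omega

theorem noMoveU (hk : 1 ≤ kap) (hl : 1 ≤ lam)
    (hkmin : ∀ k' ∈ K, kap + 1 ≤ k') (hlmin : ∀ l' ∈ L, lam + 1 ≤ l')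
    (j : ℕ) (w' : List AB) :
    ¬ Step K L (replicate kap AB.a ++ Sw kap j) w' := by
  rintro ⟨x, y, hw', (⟨k', hk', heq⟩ | ⟨l', hl', heq⟩)⟩
  · have h1 : k' ≤ kap := rbU_a_of (rbS_a j) k' ⟨x, y, heq.symm⟩
    have := hkmin k' hk'
    omega
  · have h1 : l' ≤ 1 := rbU_b_of hk (rbS_b hk j) l' ⟨x, y, heq.symm⟩
    have := hlmin l' hl'
    omega

theorem stepW_unique (hk : 1 ≤ kap) (hl : 1 ≤ lam)
    (hkmin : ∀ k' ∈ K, kap + 1 ≤ k') (hlmin : ∀ l' ∈ L, lam + 1 ≤ l')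
    (i j : ℕ) (w' : List AB)
    (h : Step K L (Bw lam i ++ (replicate (lam+1) AB.b ++ (replicate kap AB.a ++ Sw kap j))) w') :
    w' = Bw lam i ++ (replicate kap AB.a ++ Sw kap j) := by
  obtain ⟨x, y, hw', (⟨k', hk', heq⟩ | ⟨l', hl', heq⟩)⟩ := h
  · exfalso
    have h1 : k' ≤ kap := rbW_a hk hl i j k' ⟨x, y, heq.symm⟩
    have := hkmin k' hk'
    omega
  · obtain ⟨x₁, m, y₁, hW, hle, hx₁, hy₁, hxy⟩ := occ_maximalize heq
    have hll := hlmin l' hl'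
    have hmatch := occ_match (u := Bw lam i) (v := replicate kap AB.a ++ Sw kap j)
      (m := lam+1) (m' := m) (x := x₁) (y := y₁)
      (by rw [List.append_assoc]; exact hW)
      (lastB lam i) (by rw [headU hk]; simp) hx₁ hy₁
    rcases hmatch with ⟨h1, h2, h3⟩ | hbad | hbad
    · have hleq : l' = lam + 1 := by omega
      rw [hw', hxy, ← h1, ← h3, show m - l' = 0 by omega]
      simp
    · exfalso
      have := rbB_b hl i m hbad
      omega
    · exfalso
      have := rbU_b_of hk (rbS_b hk j) m hbad
      omega

theorem stepW_exists (hlmem : lam + 1 ∈ L) (i j : ℕ) :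
    Step K L (Bw lam i ++ (replicate (lam+1) AB.b ++ (replicate kap AB.a ++ Sw kap j)))
      (Bw lam i ++ (replicate kap AB.a ++ Sw kap j)) :=
  ⟨Bw lam i, replicate kap AB.a ++ Sw kap j, rfl,
    Or.inr ⟨lam+1, hlmem, by simp [List.append_assoc]⟩⟩

theorem stepV_unique (hk : 1 ≤ kap) (hl : 1 ≤ lam)
    (hkmin : ∀ k' ∈ K, kap + 1 ≤ k') (hlmin : ∀ l' ∈ L, lam + 1 ≤ l')
    (i j : ℕ) (w' : List AB)
    (h : Step K L ((Bw lam i ++ replicate lam AB.b) ++ (replicate (kap+1) AB.a ++ Sw kap j)) w') :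
    w' = (Bw lam i ++ replicate lam AB.b) ++ Sw kap j := by
  obtain ⟨x, y, hw', (⟨k', hk', heq⟩ | ⟨l', hl', heq⟩)⟩ := h
  · obtain ⟨x₁, m, y₁, hW, hle, hx₁, hy₁, hxy⟩ := occ_maximalize heq
    have hkk := hkmin k' hk'
    have hmatch := occ_match (u := Bw lam i ++ replicate lam AB.b) (v := Sw kap j)
      (m := kap+1) (m' := m) (x := x₁) (y := y₁)
      (by rw [List.append_assoc]; exact hW)
      (by rw [lastBβ hl i]; simp) (headS kap j) hx₁ hy₁
    rcases hmatch with ⟨h1, h2, h3⟩ | hbad | hbad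
    · rw [hw', hxy, ← h1, ← h3, show m - k' = 0 by omega]
      simp
    · exfalso
      have := rbBβ_a hl i m hbad
      omega
    · exfalso
      have := rbS_a j m hbad
      omega
  · exfalso
    have h1 : l' ≤ lam := rbV_b hk hl i j l' ⟨x, y, heq.symm⟩
    have := hlmin l' hl'
    omega

theorem stepV_exists (hkmem : kap + 1 ∈ K) (i j : ℕ) :
    Step K L ((Bw lam i ++ replicate lam AB.b) ++ (replicate (kap+1) AB.a ++ Sw kap j))
      ((Bw lam i ++ replicate lam AB.b) ++ Sw kap j) :=
  ⟨Bw lam i ++ replicate lam AB.b, Sw kap j, rfl,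
    Or.inl ⟨kap+1, hkmem, by simp [List.append_assoc]⟩⟩

theorem eqE1 (kap lam i j : ℕ) : (Bw lam i ++ replicate lam AB.b) ++ Sw kap (j+1)
    = Bw lam i ++ (replicate (lam+1) AB.b ++ (replicate kap AB.a ++ Sw kap j)) := by
  show (Bw lam i ++ replicate lam AB.b) ++ (AB.b :: (replicate kap AB.a ++ Sw kap j)) = _
  rw [List.replicate_succ']
  simp [List.append_assoc]

theorem eqE2 (kap lam i j : ℕ) : Bw lam (i+1) ++ (replicate kap AB.a ++ Sw kap j)
    = (Bw lam i ++ replicate lam AB.b) ++ (replicate (kap+1) AB.a ++ Sw kap j) := by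
  show (Bw lam i ++ (replicate lam AB.b ++ [AB.a])) ++ _ = _
  rw [List.replicate_succ]
  simp [List.append_assoc]

end Game

end Stmt5Aux

theorem stmt5 (K L : Finset ℕ) (hK : K.Nonempty) (hL : L.Nonempty)
    (hkgt : ∀ k ∈ K, 1 < k) (hlgt : ∀ l ∈ L, 1 < l)
    (P : List AB → Prop)
    (hP : ∀ w, P w ↔ ∀ w', Step K L w w' → ¬ P w') :
    ¬ Regular {w | P w} := by
  open Stmt5Aux in
  rintro ⟨σ, instF, M, hM⟩
  have hkmemK : K.min' hK ∈ K := K.min'_mem hK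
  have hlmemL : L.min' hL ∈ L := L.min'_mem hL
  have hk2 : 2 ≤ K.min' hK := hkgt _ hkmemK
  have hl2 : 2 ≤ L.min' hL := hlgt _ hlmemL
  obtain ⟨kap, hkap⟩ : ∃ kap, K.min' hK = kap + 1 := ⟨K.min' hK - 1, by omega⟩
  obtain ⟨lam, hlam⟩ : ∃ lam, L.min' hL = lam + 1 := ⟨L.min' hL - 1, by omega⟩
  have hk1 : 1 ≤ kap := by omega
  have hl1 : 1 ≤ lam := by omega
  have hkmem : kap + 1 ∈ K := hkap ▸ hkmemK
  have hlmem : lam + 1 ∈ L := hlam ▸ hlmemL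
  have hkmin : ∀ k' ∈ K, kap + 1 ≤ k' := fun k' h => hkap ▸ K.min'_le k' h
  have hlmin : ∀ l' ∈ L, lam + 1 ≤ l' := fun l' h => hlam ▸ L.min'_le l' h
  have pNoMove : ∀ w, (∀ w', ¬ Step K L w w') → P w := fun w h =>
    (hP w).mpr (fun w' hw' => absurd hw' (h w'))
  have pIff : ∀ w s, Step K L w s → (∀ w', Step K L w w' → w' = s) → (P w ↔ ¬ P s) := by
    intro w s hs hu
    rw [hP w]
    constructor
    · intro h
      exact h s hs
    · intro h w' hw'
      rw [hu w' hw']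
      exact h
  have key : ∀ j i,
      P ((Bw lam i ++ List.replicate lam AB.b) ++ Sw kap j) ↔ j ≤ i := by
    intro j
    induction j with
    | zero =>
      intro i
      simp only [Sw, List.append_nil]
      exact iff_of_true
        (pNoMove _ (fun w' => noMoveW0 hk1 hl1 hkmin hlmin i w')) (by omega)
    | succ j ih =>
      intro i
      rw [eqE1]
      rw [pIff _ _ (stepW_exists hlmem i j)
        (fun w' hw' => stepW_unique hk1 hl1 hkmin hlmin i j w' hw')]
      cases i with
      | zero =>
        have hPU : P (Bw lam 0 ++ (List.replicate kap AB.a ++ Sw kap j)) := by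
          have he : Bw lam 0 ++ (List.replicate kap AB.a ++ Sw kap j)
              = List.replicate kap AB.a ++ Sw kap j := by simp [Bw]
          rw [he]
          exact pNoMove _ (fun w' => noMoveU hk1 hl1 hkmin hlmin j w')
        simp [hPU]
      | succ i =>
        rw [eqE2]
        rw [pIff _ _ (stepV_exists hkmem i j)
          (fun w' hw' => stepV_unique hk1 hl1 hkmin hlmin i j w' hw')]
        rw [not_not, ih i]
        omega
  haveI : Finite σ := Finite.of_fintype σ
  have main : ∀ i i', i < i' →
      M.evalFrom M.start (Bw lam i ++ List.replicate lam AB.b)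
        = M.evalFrom M.start (Bw lam i' ++ List.replicate lam AB.b) → False := by
    intro i i' hlt heq
    have hmem : ∀ n j : ℕ,
        ((Bw lam n ++ List.replicate lam AB.b) ++ Sw kap j ∈ M.accepts)
          ↔ P ((Bw lam n ++ List.replicate lam AB.b) ++ Sw kap j) := by
      intro n j
      rw [hM]
      rfl
    have e1 : ((Bw lam i ++ List.replicate lam AB.b) ++ Sw kap i' ∈ M.accepts)
        ↔ ((Bw lam i' ++ List.replicate lam AB.b) ++ Sw kap i' ∈ M.accepts) := by
      rw [DFA.mem_accepts, DFA.mem_accepts]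
      show M.evalFrom M.start _ ∈ _ ↔ M.evalFrom M.start _ ∈ _
      rw [DFA.evalFrom_of_append, heq, ← DFA.evalFrom_of_append]
    rw [hmem, hmem, key, key] at e1
    omega
  obtain ⟨i, i', hne, heq⟩ := Finite.exists_ne_map_eq_of_infinite
    (fun n : ℕ => M.evalFrom M.start (Bw lam n ++ List.replicate lam AB.b))
  rcases lt_or_gt_of_ne hne with h | h
  · exact main i i' h heq
  · exact main i' i h heq.symm
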